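/- arXiv:2510.22078 — 9 statements merged into one kernel-verified Lean document; each statement's English description precedes it below -/
import Mathlib

section
/- For e ≥ 3, the product of all odd positive integers less than 2^e is congruent to 2^e + 1 modulo 2^{e+1}. -/
/-!
Write `P n` for the product of the odd numbers below `n`. Splitting `[0, 4n)` at `2n` gives
`P (4n) = P (2n) * ∏ (2n + j)`, and pairing `j` with `2n - j` in both products (for `n` even)
shows that the two factors agree modulo `8n²`, since `(2n + j)(4n - j) = j(2n - j) + 8n²`.
So `P (2^(e+1)) ≡ P (2^e)^2 [MOD 2^(e+2)]`, and squaring `P (2^e) ≡ 2^e + 1 [MOD 2^(e+1)]`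
gives `P (2^(e+1)) ≡ (2^e + 1)^2 ≡ 2^(e+1) + 1 [MOD 2^(e+2)]`.
-/

open Finset

section OddProducts

variable {M : Type*} [CommMonoid M] (f : ℕ → M) {n : ℕ}

theorem prod_filter_odd_range_two_mul (hn : Even n) :
    ∏ j ∈ (range (2 * n)).filter Odd, f j
      = (∏ j ∈ (range n).filter Odd, f j) * ∏ j ∈ (range n).filter Odd, f (n + j) := by
  simp only [prod_filter, two_mul, prod_range_add]
  congr 1
  refine prod_congr rfl fun j _ => ?_
  simp [Nat.odd_add', hn]

theorem prod_filter_odd_range_reflect (hn : Even n) :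
    ∏ j ∈ (range n).filter Odd, f (n - j) = ∏ j ∈ (range n).filter Odd, f j := by
  have hmaps : ∀ j ∈ (range n).filter Odd, n - j ∈ (range n).filter Odd := by
    simp only [mem_filter, mem_range]
    intro j ⟨hjn, hj⟩
    exact ⟨by have := hj.pos; omega, Nat.Even.sub_odd hjn.le hn hj⟩
  refine prod_nbij' (n - ·) (n - ·) hmaps hmaps ?_ ?_ fun _ _ => rfl <;>
  · intro j hj
    simp only [mem_filter, mem_range] at hj
    omega

theorem prod_filter_odd_range_two_mul_eq_prod_mul_reflect (hn : Even n) :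
    ∏ j ∈ (range (2 * n)).filter Odd, f j
      = ∏ j ∈ (range n).filter Odd, f j * f (2 * n - j) := by
  rw [prod_filter_odd_range_two_mul f hn, ← prod_filter_odd_range_reflect (fun j => f (n + j)) hn,
    ← prod_mul_distrib]
  refine prod_congr rfl fun j hj => ?_
  rw [mem_filter, mem_range] at hj
  rw [show n + (n - j) = 2 * n - j by omega]

end OddProducts

theorem prod_filter_odd_range_add_modEq {n : ℕ} (hn : Even n) :
    ∏ j ∈ (range (2 * n)).filter Odd, (2 * n + j)
      ≡ ∏ j ∈ (range (2 * n)).filter Odd, j [MOD 8 * n ^ 2] := by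
  rw [prod_filter_odd_range_two_mul_eq_prod_mul_reflect _ hn,
    prod_filter_odd_range_two_mul_eq_prod_mul_reflect _ hn]
  refine Nat.ModEq.prod fun j hj => ?_
  rw [mem_filter, mem_range] at hj
  have hpair : (2 * n + j) * (2 * n + (2 * n - j)) = j * (2 * n - j) + 8 * n ^ 2 * 1 := by
    zify [show j ≤ 2 * n by omega]
    ring
  rw [hpair]
  exact Nat.add_mul_mod_self_left _ _ _

theorem prod_filter_odd_range_four_mul_modEq {n : ℕ} (hn : Even n) :
    ∏ j ∈ (range (4 * n)).filter Odd, j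
      ≡ (∏ j ∈ (range (2 * n)).filter Odd, j) ^ 2 [MOD 8 * n ^ 2] := by
  rw [show 4 * n = 2 * (2 * n) by ring, prod_filter_odd_range_two_mul _ (even_two_mul n)]
  simpa only [sq] using (prod_filter_odd_range_add_modEq hn).mul_left _

theorem Nat.ModEq.sq_two_mul {n a b : ℕ} (hn : 2 ∣ n) (h : a ≡ b [MOD n]) :
    a ^ 2 ≡ b ^ 2 [MOD 2 * n] := by
  obtain ⟨c, hc⟩ := (Nat.modEq_iff_dvd.mp h)
  obtain ⟨d, hd⟩ : (2 : ℤ) ∣ b + a := by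
    have := (Nat.modEq_iff_dvd.mp (h.of_dvd hn))
    omega
  refine Nat.modEq_iff_dvd.mpr ⟨c * d, ?_⟩
  push_cast
  linear_combination (b + a : ℤ) * hc + n * c * hd

theorem two_pow_add_one_sq_modEq {e : ℕ} (he : 2 ≤ e) :
    (2 ^ e + 1) ^ 2 ≡ 2 ^ (e + 1) + 1 [MOD 2 ^ (e + 2)] := by
  obtain ⟨k, rfl⟩ := Nat.exists_eq_add_of_le' he
  have hexpand : (2 ^ (k + 2) + 1) ^ 2 = 2 ^ (k + 2 + 1) + 1 + 2 ^ (k + 2 + 2) * 2 ^ k := by ring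
  rw [hexpand]
  exact Nat.add_mul_mod_self_left _ _ _

theorem odd_prod_mod (e : ℕ) (he : 3 ≤ e) :
    (∏ j ∈ (Finset.range (2 ^ e)).filter (fun j => Odd j), j)
      ≡ 2 ^ e + 1 [MOD 2 ^ (e + 1)] := by
  induction e, he using Nat.le_induction with
  | base => decide
  | succ e he ih =>
    obtain ⟨k, rfl⟩ : ∃ k, e = k + 2 := ⟨e - 2, by omega⟩
    have hdouble := prod_filter_odd_range_four_mul_modEq (n := 2 ^ (k + 1)) (by simp [Nat.even_pow])
    rw [show 4 * 2 ^ (k + 1) = 2 ^ (k + 2 + 1) by ring, show 2 * 2 ^ (k + 1) = 2 ^ (k + 2) by ring]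
      at hdouble
    calc _ ≡ (∏ j ∈ (range (2 ^ (k + 2))).filter Odd, j) ^ 2 [MOD 2 ^ (k + 2 + 2)] :=
          hdouble.of_dvd ⟨2 ^ (k + 1), by ring⟩
      _ ≡ (2 ^ (k + 2) + 1) ^ 2 [MOD 2 ^ (k + 2 + 2)] := by
          simpa only [← pow_succ'] using ih.sq_two_mul (dvd_pow_self 2 (by omega))
      _ ≡ 2 ^ (k + 2 + 1) + 1 [MOD 2 ^ (k + 2 + 1 + 1)] := two_pow_add_one_sq_modEq (by omega)
end

section
/- For e ≥ 3, the odd part of (2^{e-1})! is congruent to the odd part of (2^e)! modulo 2^e. -/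
/-!
Splitting `(2n)!` into its even and odd factors gives `(2n)! = 2ⁿ · n! · (1 · 3 ⋯ (2n - 1))`,
so `od((2n)!) = od(n!) · (1 · 3 ⋯ (2n - 1))`, and with `n = 2^(e-1)` it remains to show that the
product of the odd numbers below `2^e` is `1` modulo `2^e`. Passing from `2^e` to `2^(e+1)`,
the new odd factors are `x + 2^e ≡ x (1 + 2^e) (mod 2^(e+1))`, so the product gets squared and
multiplied by `(1 + 2^e)^(2^(e-1))`; both are `1` modulo `2^(e+1)` once the old product is `1`
modulo `2^e`. The induction starts at `1 · 3 · 5 · 7 = 105 ≡ 1 (mod 8)`.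
-/

open Finset Nat

def oddProd (n : ℕ) : ℕ := ∏ k ∈ range n, (2 * k + 1)

theorem odd_oddProd (n : ℕ) : Odd (oddProd n) :=
  prod_induction _ Odd (fun _ _ => Odd.mul) odd_one fun k _ => odd_two_mul_add_one k

theorem oddProd_succ (n : ℕ) : oddProd (n + 1) = oddProd n * (2 * n + 1) :=
  prod_range_succ _ n

theorem factorial_two_mul (n : ℕ) : (2 * n)! = 2 ^ n * oddProd n * n ! := by
  induction n with
  | zero => rfl
  | succ n ih =>
    rw [mul_add_one, factorial_succ, factorial_succ, ih, oddProd_succ, factorial_succ]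
    ring

theorem ordCompl_two_factorial_two_mul (n : ℕ) :
    ordCompl[2] (2 * n)! = oddProd n * ordCompl[2] n ! := by
  rw [factorial_two_mul, ordCompl_mul, ordCompl_pow_mul_of_not_dvd _ prime_two
    (odd_oddProd n).not_two_dvd_nat]

theorem oddProd_add (m n : ℕ) :
    oddProd (m + n) = oddProd m * ∏ k ∈ range n, (2 * k + 1 + 2 * m) := by
  rw [oddProd, prod_range_add, ← oddProd]
  congr 1
  exact prod_congr rfl fun k _ => by ring

theorem add_two_pow_modEq_mul {x : ℕ} (hx : Odd x) (e : ℕ) :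
    x + 2 ^ e ≡ x * (1 + 2 ^ e) [MOD 2 ^ (e + 1)] := by
  obtain ⟨k, rfl⟩ := hx
  have h : (2 * k + 1) * (1 + 2 ^ e) = 2 * k + 1 + 2 ^ e + 2 ^ (e + 1) * k := by ring
  rw [h]
  exact left_modEq_add_iff.mpr (dvd_mul_right _ _)

theorem prod_add_two_pow_modEq (e n : ℕ) :
    ∏ k ∈ range n, (2 * k + 1 + 2 ^ e) ≡ oddProd n * (1 + 2 ^ e) ^ n [MOD 2 ^ (e + 1)] := by
  have hpow : (1 + 2 ^ e) ^ n = ∏ _k ∈ range n, (1 + 2 ^ e) := by simp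
  rw [oddProd, hpow, ← prod_mul_distrib]
  exact ModEq.prod fun k _ => add_two_pow_modEq_mul (odd_two_mul_add_one k) e

theorem sq_modEq_one_of_modEq_one {a e : ℕ} (he : 1 ≤ e) (h : a ≡ 1 [MOD 2 ^ e]) :
    a ^ 2 ≡ 1 [MOD 2 ^ (e + 1)] := by
  obtain ⟨m, rfl⟩ : ∃ m, a = 1 + 2 ^ e * m := by
    have hmod : a % 2 ^ e = 1 :=
      Eq.trans h (mod_eq_of_lt (Nat.one_lt_two_pow_iff.mpr (by omega)))
    exact ⟨a / 2 ^ e, by rw [← hmod, add_comm, div_add_mod]⟩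
  have h2 : (1 + 2 ^ e * m) ^ 2 = 1 + 2 ^ (e + 1) * (m + 2 ^ (e - 1) * m ^ 2) := by
    obtain ⟨d, rfl⟩ := exists_add_of_le he
    simp only [add_tsub_cancel_left]
    ring
  rw [h2]
  exact (left_modEq_add_iff.mpr (dvd_mul_right _ _)).symm

theorem one_add_two_pow_pow_modEq_one {e n : ℕ} (he : 1 ≤ e) (hn : Even n) :
    (1 + 2 ^ e) ^ n ≡ 1 [MOD 2 ^ (e + 1)] := by
  obtain ⟨m, rfl⟩ := hn
  rw [← two_mul, pow_mul]
  simpa using ((sq_modEq_one_of_modEq_one he (left_modEq_add_iff.mpr dvd_rfl).symm).pow m)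

theorem oddProd_two_pow_modEq_one {e : ℕ} (he : 2 ≤ e) :
    oddProd (2 ^ e) ≡ 1 [MOD 2 ^ (e + 1)] := by
  induction e, he using le_induction with
  | base => decide
  | succ e he ih =>
    have hsplit := oddProd_add (2 ^ e) (2 ^ e)
    rw [← two_mul, ← pow_succ'] at hsplit
    calc oddProd (2 ^ (e + 1))
        = oddProd (2 ^ e) * ∏ k ∈ range (2 ^ e), (2 * k + 1 + 2 ^ (e + 1)) := hsplit
      _ ≡ oddProd (2 ^ e) * (oddProd (2 ^ e) * (1 + 2 ^ (e + 1)) ^ 2 ^ e)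
          [MOD 2 ^ (e + 1 + 1)] :=
          (prod_add_two_pow_modEq (e + 1) (2 ^ e)).mul_left _
      _ = oddProd (2 ^ e) ^ 2 * (1 + 2 ^ (e + 1)) ^ 2 ^ e := by ring
      _ ≡ 1 * 1 [MOD 2 ^ (e + 1 + 1)] :=
          (sq_modEq_one_of_modEq_one (by omega) ih).mul
            (one_add_two_pow_pow_modEq_one (by omega) (even_pow.mpr ⟨even_two, by omega⟩))

theorem odd_part_factorial_mod (e : ℕ) (he : 3 ≤ e) :
    ordCompl[2] (Nat.factorial (2 ^ (e - 1)))
      ≡ ordCompl[2] (Nat.factorial (2 ^ e)) [MOD 2 ^ e] := by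
  obtain ⟨d, rfl⟩ : ∃ d, e = d + 1 := ⟨e - 1, by omega⟩
  rw [add_tsub_cancel_right, pow_succ', ordCompl_two_factorial_two_mul, ← pow_succ']
  calc ordCompl[2] (2 ^ d)!
      = 1 * ordCompl[2] (2 ^ d)! := (one_mul _).symm
    _ ≡ oddProd (2 ^ d) * ordCompl[2] (2 ^ d)! [MOD 2 ^ (d + 1)] :=
        (oddProd_two_pow_modEq_one (by omega)).symm.mul_right _
end

section
/- For every e ≥ 1, od(2^e!) = ∏_{m=2}^{e} h(m)^{e+1-m}, where h(m) is the product of all odd integers j with 2^{m-1}+1 ≤ j ≤ 2^m - 1. -/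
/-!
Pairing off the even factors, `(2n)! = 2ⁿ · n! · ∏_{j < 2n odd} j`, so the odd part of
`(2^(e+1))!` is that of `(2^e)!` times the product of all odd numbers below `2^(e+1)`, and
this product splits along the dyadic blocks `(2^(m-1), 2^m)` as `h 2 ⋯ h (e+1)`. Unfolding
the recursion, `h m` is picked up once at each level `m, m+1, …, e`, i.e. `e + 1 - m` times.
-/

def h (m : ℕ) : ℕ := ∏ j ∈ (Finset.Ioo (2 ^ (m - 1)) (2 ^ m)).filter (fun j => Odd j), j

open Finset Nat

lemma odd_prod_filter_odd (s : Finset ℕ) : Odd (∏ j ∈ s.filter Odd, j) :=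
  prod_induction _ Odd (fun _ _ => Odd.mul) odd_one fun _ hj => (mem_filter.1 hj).2

lemma factorial_two_mul_eq (n : ℕ) :
    (2 * n)! = 2 ^ n * (n ! * ∏ j ∈ (range (2 * n)).filter Odd, j) := by
  induction n with
  | zero => simp
  | succ n ih =>
    have hodd :
        (range (2 * (n + 1))).filter Odd = insert (2 * n + 1) ((range (2 * n)).filter Odd) := by
      ext j
      simp only [mem_filter, mem_range, mem_insert, Nat.odd_iff]
      omega
    rw [hodd, prod_insert (by simp), show 2 * (n + 1) = 2 * n + 1 + 1 by ring,
      factorial_succ, factorial_succ, ih, factorial_succ]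
    ring

lemma ordCompl_two_factorial_two_mul_s4 (n : ℕ) :
    ordCompl[2] (2 * n)! = ordCompl[2] n ! * ∏ j ∈ (range (2 * n)).filter Odd, j := by
  rw [factorial_two_mul_eq, ordCompl_self_pow_mul _ _ prime_two, ordCompl_mul,
    (ordCompl_eq_self_iff_zero_or_not_dvd _ prime_two).2
      (Or.inr (odd_prod_filter_odd _).not_two_dvd_nat)]

lemma prod_filter_odd_range_two_pow {m : ℕ} (hm : 1 ≤ m) :
    ∏ j ∈ (range (2 ^ m)).filter Odd, j = ∏ k ∈ Icc 2 m, h k := by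
  induction m, hm using Nat.le_induction with
  | base => decide
  | succ m hm ih =>
    have hsplit : (range (2 ^ (m + 1))).filter Odd
        = (range (2 ^ m)).filter Odd ∪ (Ioo (2 ^ m) (2 ^ (m + 1))).filter Odd := by
      obtain ⟨k, hk⟩ : 2 ∣ 2 ^ m := dvd_pow_self 2 (by omega)
      ext j
      simp only [mem_filter, mem_range, mem_union, mem_Ioo, Nat.odd_iff, pow_succ]
      omega
    have hdisj : Disjoint ((range (2 ^ m)).filter Odd) ((Ioo (2 ^ m) (2 ^ (m + 1))).filter Odd) :=
      disjoint_filter_filter (by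
        simp only [disjoint_left, mem_range, mem_Ioo]
        omega)
    rw [hsplit, prod_union hdisj, ih, prod_Icc_succ_top (by omega)]
    rfl

lemma prod_Icc_pow_sub_mul_prod {M : Type*} [CommMonoid M] (f : ℕ → M) (a e : ℕ) :
    (∏ m ∈ Icc a e, f m ^ (e + 1 - m)) * ∏ m ∈ Icc a (e + 1), f m
      = ∏ m ∈ Icc a (e + 1), f m ^ (e + 1 + 1 - m) := by
  have hextend : ∏ m ∈ Icc a e, f m ^ (e + 1 - m) = ∏ m ∈ Icc a (e + 1), f m ^ (e + 1 - m) :=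
    prod_subset (Icc_subset_Icc_right (by omega)) fun m hm hme => by
      simp only [mem_Icc] at hm hme
      rw [show e + 1 - m = 0 by omega, pow_zero]
  rw [hextend, ← prod_mul_distrib]
  refine prod_congr rfl fun m hm => ?_
  rw [← pow_succ]
  congr 1
  simp only [mem_Icc] at hm
  omega

theorem odd_part_factorial_prod_general (e : ℕ) :
    ordCompl[2] (Nat.factorial (2 ^ e)) = ∏ m ∈ Finset.Icc 2 e, (h m) ^ (e + 1 - m) := by
  induction e with
  | zero => simp
  | succ e ih =>
    rw [pow_succ', ordCompl_two_factorial_two_mul_s4, ← pow_succ', ih,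
      prod_filter_odd_range_two_pow (by omega), prod_Icc_pow_sub_mul_prod]

theorem odd_part_factorial_prod (e : ℕ) (he : 1 ≤ e) :
    ordCompl[2] (Nat.factorial (2 ^ e)) = ∏ m ∈ Finset.Icc 2 e, (h m) ^ (e + 1 - m) :=
  odd_part_factorial_prod_general e
end

section
/- For e ≥ 2, the quantity σ̂_1(S_e) = ∑_{j ∈ S_e} ∏_{i ∈ S_e, i ≠ j} i is divisible by 2^e. -/
/-!
Work modulo `2 ^ e`, where the odd residues are exactly the units. Pairing `j` with `2 ^ e - j`
(the residue `-j`) matches the term `P / j` with `P / (-j) = -P / j`, where `P` is the product of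
all odd residues, so the sum cancels in pairs. The pairing has no fixed point because the only
candidate, `2 ^ (e - 1)`, is even once `e ≥ 2`. The same argument works for the totatives of any
`n > 2`.
-/

open Finset

theorem Finset.sum_prod_erase_eq_zero_of_involution {ι R : Type*} [CommRing R] [DecidableEq ι]
    (s : Finset ι) (f : ι → R) (g : ι → ι) (hg_mem : ∀ a ∈ s, g a ∈ s)
    (hg_invol : ∀ a ∈ s, g (g a) = a) (hg_ne : ∀ a ∈ s, g a ≠ a)
    (hf_neg : ∀ a ∈ s, f (g a) = -f a) (hf_unit : ∀ a ∈ s, IsUnit (f a)) :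
    ∑ j ∈ s, ∏ i ∈ s.erase j, f i = 0 := by
  refine sum_involution (fun a _ => g a) (fun a ha => ?_) (fun a ha _ => hg_ne a ha)
    hg_mem hg_invol
  refine (hf_unit a ha).mul_left_cancel ?_
  have h_a := mul_prod_erase s f ha
  have h_ga := mul_prod_erase s f (hg_mem a ha)
  rw [hf_neg a ha] at h_ga
  linear_combination h_a - h_ga

theorem Nat.sub_mem_totatives {n a : ℕ} (hn : 1 < n) (ha : a ∈ {b ∈ range n | n.Coprime b}) :
    n - a ∈ {b ∈ range n | n.Coprime b} := by
  simp only [mem_filter, mem_range] at ha ⊢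
  obtain ⟨ha_lt, hcop⟩ := ha
  have ha_pos : 0 < a := Nat.pos_of_ne_zero fun h => by
    rw [h, Nat.coprime_zero_right] at hcop
    omega
  exact ⟨by omega, (Nat.coprime_self_sub_right ha_lt.le).2 hcop⟩

theorem Nat.sub_ne_self_of_coprime {n a : ℕ} (hn : 2 < n) (hcop : n.Coprime a) : n - a ≠ a := by
  intro h
  have hn_eq : n = 2 * a := by omega
  have ha_one : a = 1 := by
    rw [hn_eq, Nat.Coprime, Nat.gcd_mul_left_left] at hcop
    exact hcop
  omega

theorem Nat.dvd_sum_prod_erase_totatives {n : ℕ} (hn : 2 < n) :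
    n ∣ ∑ j ∈ {a ∈ range n | n.Coprime a}, ∏ i ∈ {a ∈ range n | n.Coprime a}.erase j, i := by
  rw [← ZMod.natCast_eq_zero_iff]
  push_cast
  refine sum_prod_erase_eq_zero_of_involution _ _ (n - ·)
    (fun a ha => sub_mem_totatives (by omega) ha) (fun a ha => ?_)
    (fun a ha => sub_ne_self_of_coprime hn (mem_filter.1 ha).2) (fun a ha => ?_)
    (fun a ha => (ZMod.isUnit_iff_coprime a n).2 (mem_filter.1 ha).2.symm) <;>
    have ha_lt := mem_range.1 (mem_filter.1 ha).1
  · omega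
  · rw [Nat.cast_sub ha_lt.le, ZMod.natCast_self, zero_sub]

theorem sigma_hat_one_div (e : ℕ) (he : 2 ≤ e) :
    (2 ^ e : ℕ) ∣ ∑ j ∈ (Finset.range (2 ^ e)).filter (fun j => Odd j),
      ∏ i ∈ ((Finset.range (2 ^ e)).filter (fun j => Odd j)).erase j, i := by
  have h_odd_iff : ∀ a, Odd a ↔ (2 ^ e).Coprime a := fun a => by
    rw [Nat.coprime_pow_left_iff (by omega), Nat.coprime_two_left]
  simp only [h_odd_iff]
  exact Nat.dvd_sum_prod_erase_totatives
    ((by norm_num : 2 < 2 ^ 2).trans_le (Nat.pow_le_pow_right two_pos he))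
end

section
/- For e ≥ 3 and any integer A, ∏_{i ∈ S_e} (A·2^e + i) ≡ ∏_{i ∈ S_e} i modulo 2^{3e-1}. -/
/-!
Pair each odd `i < 2^(e-1)` with `2^e - i`: with `N = 2^e`, the two factors multiply to
`A(A+1) N^2 + i(N - i)`, so the product becomes `∏ (y + C_i)` with `y = A(A+1) N^2` and odd
`C_i = i(N - i)`. Since `2^(3e-1) ∣ y^2`, modulo `2^(3e-1)` this is
`(∏ C_i)(1 + y ∑ C_i⁻¹)`. Modulo `2^(e-2)` we have `C_i⁻¹ ≡ -i⁻²`, and `i ↦ i⁻¹ (mod 2^(e-1))`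
permutes the odd residues, so `∑ C_i⁻¹ ≡ -∑ i^2 ≡ 0`, the last sum being `n(4n^2-1)/3` with
`n = 2^(e-2)`. As `A(A+1)` is even, `y ∑ C_i⁻¹` is divisible by `2 · 2^(2e) · 2^(e-2) = 2^(3e-1)`.
-/

open Finset

def oddsBelow (n : ℕ) : Finset ℕ := (range n).filter Odd

@[simp]
theorem mem_oddsBelow {n i : ℕ} : i ∈ oddsBelow n ↔ i < n ∧ Odd i := by
  simp [oddsBelow]

theorem oddsBelow_two_mul_add_two (n : ℕ) :
    oddsBelow (2 * n + 2) = insert (2 * n + 1) (oddsBelow (2 * n)) := by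
  ext i
  simp only [mem_oddsBelow, mem_insert, Nat.odd_iff]
  omega

theorem prod_oddsBelow_two_mul {M : Type*} [CommMonoid M] {n : ℕ} (hn : Even n) (f : ℕ → M) :
    ∏ i ∈ oddsBelow (2 * n), f i = ∏ i ∈ oddsBelow n, f i * f (2 * n - i) := by
  obtain ⟨m, rfl⟩ := hn
  rw [← prod_filter_mul_prod_filter_not _ (· < m + m), prod_mul_distrib]
  congr 1
  · congr 1
    ext i
    simp only [mem_filter, mem_oddsBelow, Nat.odd_iff]
    omega
  · refine prod_nbij' (2 * (m + m) - ·) (2 * (m + m) - ·) ?_ ?_ ?_ ?_ ?_ <;>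
      intro i hi <;> simp only [mem_filter, mem_oddsBelow, Nat.odd_iff] at hi ⊢ <;>
      first | omega | rw [Nat.sub_sub_self hi.1.1.le]

theorem prod_oddsBelow_mul_add {N n : ℕ} (hN : N = 2 * n) (hn : Even n) (A : ℤ) :
    ∏ i ∈ oddsBelow N, (A * N + i) =
      ∏ i ∈ oddsBelow n, (A * (A + 1) * N ^ 2 + i * (N - i)) := by
  subst hN
  rw [prod_oddsBelow_two_mul hn]
  refine prod_congr rfl fun i hi => ?_
  rw [Nat.cast_sub (by grind [mem_oddsBelow])]
  ring

theorem sum_oddsBelow_two_mul_sq (n : ℕ) :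
    3 * ∑ i ∈ oddsBelow (2 * n), i ^ 2 + n = 4 * n ^ 3 := by
  induction n with
  | zero => simp [oddsBelow]
  | succ n ih =>
    rw [mul_add_one, oddsBelow_two_mul_add_two, sum_insert (by simp)]
    linear_combination ih

theorem two_pow_dvd_sum_oddsBelow_sq (k : ℕ) : 2 ^ k ∣ ∑ i ∈ oddsBelow (2 ^ (k + 1)), i ^ 2 := by
  have h := sum_oddsBelow_two_mul_sq (2 ^ k)
  rw [← pow_succ'] at h
  have h3 : 2 ^ k ∣ 3 * ∑ i ∈ oddsBelow (2 ^ (k + 1)), i ^ 2 :=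
    (Nat.dvd_add_left (dvd_refl _)).mp (h ▸ dvd_mul_of_dvd_right (dvd_pow_self _ three_ne_zero) 4)
  exact (Nat.Coprime.pow_left k (by norm_num : Nat.Coprime 2 3)).dvd_of_dvd_mul_left h3

theorem sum_comp_val_inv_filter_coprime {M : Type*} [AddCommMonoid M] (N : ℕ) [NeZero N]
    (f : ℕ → M) :
    ∑ i ∈ (range N).filter (·.Coprime N), f (i : ZMod N)⁻¹.val =
      ∑ i ∈ (range N).filter (·.Coprime N), f i := by
  have hinv {i : ℕ} (hi : i.Coprime N) : ((i : ZMod N)⁻¹.val : ZMod N)⁻¹ = i :=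
    ZMod.inv_eq_of_mul_eq_one _ _ _ (ZMod.val_inv_mul hi)
  have hmaps {i : ℕ} (hi : i.Coprime N) : (i : ZMod N)⁻¹.val ∈ (range N).filter (·.Coprime N) := by
    rw [mem_filter, mem_range, ← ZMod.isUnit_iff_coprime]
    exact ⟨ZMod.val_lt _, IsUnit.of_mul_eq_one _ (ZMod.val_inv_mul hi)⟩
  refine sum_nbij' (fun i => (i : ZMod N)⁻¹.val) (fun i => (i : ZMod N)⁻¹.val) ?_ ?_ ?_ ?_
    (fun _ _ => rfl) <;> intro i hi <;> simp only [mem_filter, mem_range] at hi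
  iterate 2 exact hmaps hi.2
  iterate 2 rw [hinv hi.2, ZMod.val_natCast_of_lt hi.1]

theorem oddsBelow_two_pow_succ (k : ℕ) :
    oddsBelow (2 ^ (k + 1)) = (range (2 ^ (k + 1))).filter (·.Coprime (2 ^ (k + 1))) := by
  refine filter_congr fun i _ => ?_
  rw [Nat.coprime_pow_right_iff k.succ_pos, Nat.coprime_two_right]

theorem two_pow_dvd_sum_of_sq_mul_modEq (k : ℕ) (u : ℤ) (d : ℕ → ℤ)
    (hd : ∀ i ∈ oddsBelow (2 ^ (k + 1)), (i : ℤ) ^ 2 * d i ≡ u [ZMOD 2 ^ k]) :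
    (2 : ℤ) ^ k ∣ ∑ i ∈ oddsBelow (2 ^ (k + 1)), d i := by
  set φ : ℕ → ℕ := fun i => (i : ZMod (2 ^ (k + 1)))⁻¹.val
  have hφ : ∀ i ∈ oddsBelow (2 ^ (k + 1)), (i : ℤ) * φ i ≡ 1 [ZMOD 2 ^ k] := by
    intro i hi
    rw [oddsBelow_two_pow_succ, mem_filter] at hi
    have h : ((i * φ i : ℤ) : ZMod (2 ^ (k + 1))) = ((1 : ℤ) : ZMod (2 ^ (k + 1))) := by
      push_cast
      exact ZMod.mul_val_inv hi.2
    rw [ZMod.intCast_eq_intCast_iff] at h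
    push_cast at h
    exact h.of_dvd (pow_dvd_pow 2 k.le_succ)
  have hdφ : ∀ i ∈ oddsBelow (2 ^ (k + 1)), d i ≡ u * (φ i : ℤ) ^ 2 [ZMOD 2 ^ k] := by
    intro i hi
    calc d i = d i * 1 ^ 2 := by ring
      _ ≡ d i * ((i : ℤ) * φ i) ^ 2 [ZMOD 2 ^ k] := ((hφ i hi).pow 2).symm.mul_left _
      _ = (i : ℤ) ^ 2 * d i * (φ i : ℤ) ^ 2 := by ring
      _ ≡ u * (φ i : ℤ) ^ 2 [ZMOD 2 ^ k] := (hd i hi).mul_right _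
  have hsq : ∑ i ∈ oddsBelow (2 ^ (k + 1)), (φ i : ℤ) ^ 2 ≡ 0 [ZMOD 2 ^ k] := by
    have : NeZero (2 ^ (k + 1)) := ⟨by positivity⟩
    rw [oddsBelow_two_pow_succ, sum_comp_val_inv_filter_coprime (2 ^ (k + 1)) fun j => (j : ℤ) ^ 2,
      ← oddsBelow_two_pow_succ, Int.modEq_zero_iff_dvd]
    exact_mod_cast two_pow_dvd_sum_oddsBelow_sq k
  rw [← Int.modEq_zero_iff_dvd]
  calc ∑ i ∈ oddsBelow (2 ^ (k + 1)), d i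
      ≡ ∑ i ∈ oddsBelow (2 ^ (k + 1)), u * (φ i : ℤ) ^ 2 [ZMOD 2 ^ k] := Int.ModEq.sum hdφ
    _ = u * ∑ i ∈ oddsBelow (2 ^ (k + 1)), (φ i : ℤ) ^ 2 := (mul_sum ..).symm
    _ ≡ u * 0 [ZMOD 2 ^ k] := hsq.mul_left u
    _ = 0 := mul_zero u

theorem two_pow_dvd_sum_of_mul_sub_mul_modEq_one (k : ℕ) {c : ℤ} (hc : 2 ^ k ∣ c) (d : ℕ → ℤ)
    (hd : ∀ i ∈ oddsBelow (2 ^ (k + 1)), i * (c - i) * d i ≡ 1 [ZMOD 2 ^ k]) :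
    (2 : ℤ) ^ k ∣ ∑ i ∈ oddsBelow (2 ^ (k + 1)), d i := by
  refine two_pow_dvd_sum_of_sq_mul_modEq k (-1) d fun i hi => ?_
  have hci : c * i * d i ≡ 0 [ZMOD 2 ^ k] := ((hc.mul_right _).mul_right _).modEq_zero_int
  calc (i : ℤ) ^ 2 * d i = c * i * d i - i * (c - i) * d i := by ring
    _ ≡ 0 - 1 [ZMOD 2 ^ k] := hci.sub (hd i hi)
    _ = -1 := by norm_num

theorem Int.exists_mul_modEq_one_of_odd {c : ℤ} (hc : Odd c) (n : ℕ) :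
    ∃ d, c * d ≡ 1 [ZMOD 2 ^ n] := by
  obtain ⟨u, v, h⟩ := (Int.isCoprime_two_right.mpr hc).pow_right (n := n)
  exact ⟨u, Int.modEq_iff_dvd.mpr ⟨v, by linarith⟩⟩

theorem prod_add_modEq_of_dvd_sq {ι : Type*} {ν y : ℤ} (hy : ν ∣ y ^ 2) {s : Finset ι}
    {c d : ι → ℤ} (hcd : ∀ i ∈ s, c i * d i ≡ 1 [ZMOD ν]) :
    ∏ i ∈ s, (y + c i) ≡ (∏ i ∈ s, c i) * (1 + y * ∑ i ∈ s, d i) [ZMOD ν] := by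
  classical
  induction s using Finset.induction_on with
  | empty => simp
  | insert a s ha ih =>
    rw [prod_insert ha, prod_insert ha, sum_insert ha]
    refine ((ih fun i hi => hcd i (mem_insert_of_mem hi)).mul_left (y + c a)).trans ?_
    obtain ⟨k, hk⟩ := (hcd a (mem_insert_self a s)).dvd
    obtain ⟨l, hl⟩ := hy
    refine (Int.modEq_iff_dvd.mpr ⟨(∏ i ∈ s, c i) * (y * k + (∑ i ∈ s, d i) * l), ?_⟩).symm
    linear_combination ((∏ i ∈ s, c i) * y) * hk + ((∏ i ∈ s, c i) * (∑ i ∈ s, d i)) * hl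

theorem prod_add_modEq_prod {ι : Type*} {ν y : ℤ} (hy : ν ∣ y ^ 2) {s : Finset ι}
    {c d : ι → ℤ} (hcd : ∀ i ∈ s, c i * d i ≡ 1 [ZMOD ν]) (hyd : ν ∣ y * ∑ i ∈ s, d i) :
    ∏ i ∈ s, (y + c i) ≡ ∏ i ∈ s, c i [ZMOD ν] :=
  (prod_add_modEq_of_dvd_sq hy hcd).trans <| by
    simpa using (hyd.modEq_zero_int.add_left 1).mul_left (∏ i ∈ s, c i)

theorem prod_shift_strong (e : ℕ) (he : 3 ≤ e) (A : ℤ) :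
    (∏ i ∈ (Finset.range (2 ^ e)).filter (fun j => Odd j), (A * 2 ^ e + (i : ℤ)))
      ≡ (∏ i ∈ (Finset.range (2 ^ e)).filter (fun j => Odd j), (i : ℤ))
      [ZMOD 2 ^ (3 * e - 1)] := by
  obtain ⟨k, rfl⟩ : ∃ k, e = k + 2 := ⟨e - 2, by omega⟩
  rw [show 3 * (k + 2) - 1 = 3 * k + 5 by omega]
  have hpair (A : ℤ) := prod_oddsBelow_mul_add (pow_succ' 2 (k + 1))
    ((Nat.even_pow' k.succ_ne_zero).mpr even_two) A
  push_cast at hpair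
  change ∏ i ∈ oddsBelow _, _ ≡ ∏ i ∈ oddsBelow _, _ [ZMOD _]
  rw [hpair A, show ∏ i ∈ oddsBelow (2 ^ (k + 2)), (i : ℤ) = _ by simpa using hpair 0]
  set C : ℕ → ℤ := fun i => i * (2 ^ (k + 2) - i)
  have hodd (i : ℕ) (hi : i ∈ oddsBelow (2 ^ (k + 1))) : Odd (C i) := by
    have hi' : Odd (i : ℤ) := by exact_mod_cast (mem_oddsBelow.mp hi).2
    exact hi'.mul (((Int.even_pow' (by omega)).mpr even_two).sub_odd hi')
  choose! d hd using fun i hi => Int.exists_mul_modEq_one_of_odd (hodd i hi) (3 * k + 5)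
  obtain ⟨t, ht⟩ := two_pow_dvd_sum_of_mul_sub_mul_modEq_one k (pow_dvd_pow 2 (by omega)) d
    fun i hi => (hd i hi).of_dvd (pow_dvd_pow 2 (by omega))
  obtain ⟨B, hB⟩ := Int.even_mul_succ_self A
  refine prod_add_modEq_prod ⟨2 ^ (k + 3) * (A * (A + 1)) ^ 2, by ring⟩ hd ⟨B * t, ?_⟩
  rw [ht, hB]
  ring
end

section
/- For e ≥ 3, any integers A and B, and any natural number j, (∏_{i ∈ S_e} (A·2^e + i))^{2^j} ≡ (∏_{i ∈ S_e} (B·2^e + i))^{2^j} modulo 2^{3e-1+j}. -/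
/-
Pair each odd `i < 2^e` with `2^e - i`: for `x = A·2^e` the product becomes `∏ (c_i + y)` over
the odd `i < 2^(e-1)`, where `c_i = i (2^e - i)` does not depend on `A` and
`y = x (x + 2^e) = 2^(2e) A (A+1)` is divisible by `2^(2e+1)`. Modulo `y²` this is `∏ c_i + y E`
with `E = ∑_i ∏_{k ≠ i} c_k`, so it suffices that `2^(e-2) ∣ E`. Modulo `2^(e-2)` we have
`c_k ≡ -k²`, and inversion modulo `2^(e-1)` permutes the odd residues, so
`E ≡ (∏_k c_k) (∑_k c_k)`; finally `3 ∑_{j<n} (2j+1)² = n (4n² - 1)` shows `2^(e-2) ∣ ∑_k k²`.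
Raising a congruence modulo `2^n` to the power `2^j` gains `j` factors of `2`.
-/

open Finset

open Polynomial in
theorem Finset.sq_dvd_prod_add_sub {ι R : Type*} [CommRing R] [DecidableEq ι] (s : Finset ι)
    (c : ι → R) (y : R) :
    y ^ 2 ∣ ∏ i ∈ s, (c i + y) - (∏ i ∈ s, c i + y * ∑ i ∈ s, ∏ k ∈ s.erase i, c k) := by
  obtain ⟨K, hK⟩ := binomExpansion (∏ i ∈ s, (C (c i) + X)) 0 y
  simp only [zero_add, eval_prod, eval_add, eval_X, eval_C, derivative_prod_finset,
    derivative_add, derivative_X, derivative_C, add_zero, mul_one, eval_finsetSum] at hK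
  exact ⟨K, by linear_combination hK⟩

theorem Finset.sum_prod_erase_eq_prod_mul_sum {ι R : Type*} [CommRing R] [DecidableEq ι]
    {s : Finset ι} {a : ι → R} (σ : ι → ι) (hσ : ∀ i ∈ s, σ i ∈ s)
    (hσσ : ∀ i ∈ s, σ (σ i) = i) (ha : ∀ i ∈ s, a i * a (σ i) = 1) :
    ∑ i ∈ s, ∏ k ∈ s.erase i, a k = (∏ k ∈ s, a k) * ∑ i ∈ s, a i := by
  have herase : ∀ i ∈ s, ∏ k ∈ s.erase i, a k = (∏ k ∈ s, a k) * a (σ i) := fun i hi => by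
    have := mul_prod_erase s a hi
    linear_combination (-∏ k ∈ s.erase i, a k) * ha i hi + a (σ i) * this
  rw [sum_congr rfl herase, ← mul_sum]
  congr 1
  exact sum_nbij' σ σ hσ hσ hσσ hσσ fun _ _ => rfl

namespace ZMod

theorem coprime_val_inv_natCast {N i : ℕ} [NeZero N] (h : i.Coprime N) :
    ((i : ZMod N)⁻¹).val.Coprime N := by
  rw [← isUnit_iff_coprime, natCast_zmod_val]
  exact .of_mul_eq_one_right _ (coe_mul_inv_eq_one i h)

theorem val_inv_natCast_val_inv_natCast {N i : ℕ} [NeZero N] (h : i.Coprime N) (hi : i < N) :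
    ((((i : ZMod N)⁻¹).val : ZMod N)⁻¹).val = i := by
  rw [ZMod.inv_eq_of_mul_eq_one _ _ _ (val_inv_mul h), val_cast_of_lt hi]

end ZMod

@[to_additive]
theorem Finset.prod_filter_odd_range_eq_prod_range {M : Type*} [CommMonoid M] (f : ℕ → M) (n : ℕ) :
    ∏ i ∈ (range (2 * n)).filter (fun i => Odd i), f i = ∏ j ∈ range n, f (2 * j + 1) := by
  induction n with
  | zero => simp
  | succ n ih =>
    rw [show 2 * (n + 1) = 2 * n + 1 + 1 by ring, range_add_one, range_add_one, filter_insert,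
      filter_insert, if_pos (odd_two_mul_add_one n), if_neg (by simp), prod_insert (by simp),
      prod_range_succ, ih, mul_comm]

theorem Finset.prod_filter_odd_range_four_mul {M : Type*} [CommMonoid M] (f : ℕ → M) (n : ℕ) :
    ∏ i ∈ (range (4 * n)).filter (fun i => Odd i), f i
      = ∏ i ∈ (range (2 * n)).filter (fun i => Odd i), f i * f (4 * n - i) := by
  rw [show 4 * n = 2 * (n + n) by ring, prod_filter_odd_range_eq_prod_range,
    prod_filter_odd_range_eq_prod_range, prod_range_add,
    ← prod_range_reflect (fun j => f (2 * (n + j) + 1)), ← prod_mul_distrib]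
  refine prod_congr rfl fun j hj => ?_
  rw [mem_range] at hj
  congr 2
  omega

theorem three_mul_sum_range_odd_sq (n : ℕ) :
    3 * ∑ j ∈ range n, ((2 * j + 1 : ℕ) : ℤ) ^ 2 = n * (4 * n ^ 2 - 1) := by
  induction n with
  | zero => simp
  | succ n ih => rw [sum_range_succ, mul_add, ih]; push_cast; ring

theorem two_pow_dvd_sum_filter_odd_sq (m : ℕ) :
    (2 ^ m : ℤ) ∣ ∑ i ∈ (range (2 * 2 ^ m)).filter (fun i => Odd i), (i : ℤ) ^ 2 := by
  rw [sum_filter_odd_range_eq_sum_range]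
  refine ((show IsCoprime (2 : ℤ) 3 by norm_num).pow_left).dvd_of_dvd_mul_left ?_
  rw [three_mul_sum_range_odd_sq]
  exact ⟨4 * 2 ^ (2 * m) - 1, by push_cast; ring⟩

theorem two_pow_dvd_sum_prod_erase (m : ℕ) :
    (2 ^ m : ℤ) ∣ ∑ i ∈ (range (2 * 2 ^ m)).filter (fun i => Odd i),
      ∏ k ∈ ((range (2 * 2 ^ m)).filter (fun i => Odd i)).erase i,
        (k : ℤ) * (4 * 2 ^ m - k) := by
  set S := (range (2 * 2 ^ m)).filter (fun i => Odd i)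
  have hS : ∀ i ∈ S, i.Coprime (2 * 2 ^ m) ∧ i < 2 * 2 ^ m := fun i hi => by
    rw [mem_filter, mem_range] at hi
    have h2 : i.Coprime 2 := Nat.coprime_two_right.mpr hi.2
    exact ⟨h2.mul_right (h2.pow_right m), hi.1⟩
  let σ : ℕ → ℕ := fun i => ((i : ZMod (2 * 2 ^ m))⁻¹).val
  have hσ : ∀ i ∈ S, σ i ∈ S := fun i hi => by
    have := ZMod.coprime_val_inv_natCast (hS i hi).1
    exact mem_filter.mpr ⟨mem_range.mpr (ZMod.val_lt _),
      Nat.coprime_two_right.mp this.coprime_mul_right_right⟩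
  have hσσ : ∀ i ∈ S, σ (σ i) = i := fun i hi =>
    ZMod.val_inv_natCast_val_inv_natCast (hS i hi).1 (hS i hi).2
  rw [show (2 ^ m : ℤ) = ((2 ^ m : ℕ) : ℤ) by norm_cast,
    ← ZMod.intCast_zmod_eq_zero_iff_dvd]
  push_cast
  have h0 : (2 : ZMod (2 ^ m)) ^ m = 0 := by exact_mod_cast ZMod.natCast_self (2 ^ m)
  simp only [h0, mul_zero, zero_sub]
  have hinv : ∀ i ∈ S, (i : ZMod (2 ^ m)) * (σ i : ZMod (2 ^ m)) = 1 := fun i hi => by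
    have := congrArg (ZMod.castHom (Dvd.intro_left 2 rfl) (ZMod (2 ^ m)))
      (ZMod.mul_val_inv (hS i hi).1)
    simpa only [map_mul, map_natCast, map_one] using this
  rw [sum_prod_erase_eq_prod_mul_sum σ hσ hσσ fun i hi => by
    linear_combination ((i : ZMod (2 ^ m)) * σ i + 1) * hinv i hi]
  have hsq : ∑ i ∈ S, (i : ZMod (2 ^ m)) ^ 2 = 0 := by
    exact_mod_cast (ZMod.intCast_zmod_eq_zero_iff_dvd _ _).mpr (two_pow_dvd_sum_filter_odd_sq m)
  simp only [mul_neg, sum_neg_distrib, ← sq, hsq, neg_zero, mul_zero]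

theorem prod_filter_odd_add_mul_modEq (m : ℕ) (A : ℤ) :
    ∏ i ∈ (range (4 * 2 ^ m)).filter (fun i => Odd i), (A * (4 * 2 ^ m) + i)
      ≡ ∏ i ∈ (range (2 * 2 ^ m)).filter (fun i => Odd i), (i : ℤ) * (4 * 2 ^ m - i)
      [ZMOD 2 ^ (3 * m + 5)] := by
  set S := (range (2 * 2 ^ m)).filter (fun i => Odd i)
  set x : ℤ := A * (4 * 2 ^ m)
  set y : ℤ := x * (x + 4 * 2 ^ m)
  have hy : 2 ^ (2 * m + 5) ∣ y := by
    obtain ⟨t, ht⟩ := Int.even_mul_succ_self A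
    exact ⟨t, by simp only [y, x]; linear_combination (16 * (2 ^ m) ^ 2) * ht⟩
  have hpair : ∀ i ∈ S, (x + i) * (x + ((4 * 2 ^ m - i : ℕ) : ℤ)) = i * (4 * 2 ^ m - i) + y :=
    fun i hi => by
      have : i ≤ 4 * 2 ^ m := by rw [mem_filter, mem_range] at hi; omega
      push_cast [this]
      ring
  rw [prod_filter_odd_range_four_mul, prod_congr rfl hpair]
  refine (Int.modEq_iff_dvd.mpr ?_).symm
  obtain ⟨K, hK⟩ := sq_dvd_prod_add_sub S (fun i : ℕ => (i : ℤ) * (4 * 2 ^ m - i)) y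
  have hdiff : ∏ i ∈ S, ((i : ℤ) * (4 * 2 ^ m - i) + y) - ∏ i ∈ S, (i : ℤ) * (4 * 2 ^ m - i)
      = y ^ 2 * K + y * ∑ i ∈ S, ∏ k ∈ S.erase i, (k : ℤ) * (4 * 2 ^ m - k) := by
    linear_combination hK
  rw [hdiff]
  refine dvd_add (dvd_mul_of_dvd_left ?_ K) ?_
  · have := pow_dvd_pow_of_dvd hy 2
    rw [← pow_mul] at this
    exact (pow_dvd_pow 2 (by omega)).trans this
  · rw [show 3 * m + 5 = 2 * m + 5 + m by ring, pow_add]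
    exact mul_dvd_mul hy (two_pow_dvd_sum_prod_erase m)

theorem Int.ModEq.pow_two_pow {n : ℕ} (hn : n ≠ 0) {a b : ℤ} (h : a ≡ b [ZMOD 2 ^ n]) (j : ℕ) :
    a ^ 2 ^ j ≡ b ^ 2 ^ j [ZMOD 2 ^ (n + j)] := by
  induction j with
  | zero => simpa
  | succ j ih =>
    rw [Int.modEq_iff_dvd] at ih ⊢
    have h2 : (2 : ℤ) ∣ b ^ 2 ^ j + a ^ 2 ^ j := by
      rw [show b ^ 2 ^ j + a ^ 2 ^ j = (b ^ 2 ^ j - a ^ 2 ^ j) + 2 * a ^ 2 ^ j by ring]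
      exact dvd_add ((dvd_pow_self 2 (by omega)).trans ih) (dvd_mul_right 2 _)
    rw [pow_succ, pow_mul, pow_mul, sq_sub_sq, ← add_assoc, pow_succ, mul_comm (b ^ 2 ^ j + _)]
    exact mul_dvd_mul ih h2

theorem prod_shift_pow (e : ℕ) (he : 3 ≤ e) (A B : ℤ) (j : ℕ) :
    (∏ i ∈ (Finset.range (2 ^ e)).filter (fun i => Odd i), (A * 2 ^ e + (i : ℤ))) ^ (2 ^ j)
      ≡ (∏ i ∈ (Finset.range (2 ^ e)).filter (fun i => Odd i), (B * 2 ^ e + (i : ℤ))) ^ (2 ^ j)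
      [ZMOD 2 ^ (3 * e - 1 + j)] := by
  obtain ⟨m, rfl⟩ : ∃ m, e = m + 2 := ⟨e - 2, by omega⟩
  rw [show 3 * (m + 2) - 1 + j = 3 * m + 5 + j by omega, show 2 ^ (m + 2) = 4 * 2 ^ m by ring,
    show (2 : ℤ) ^ (m + 2) = 4 * 2 ^ m by ring]
  exact ((prod_filter_odd_add_mul_modEq m A).trans
    (prod_filter_odd_add_mul_modEq m B).symm).pow_two_pow (by omega) j
end

section
/- For e ≥ 3, σ̂_2(S_e) ≡ 2^{e-2} modulo 2^{e-1}, where σ̂_2(S_e) = ∑_{a<b, a,b ∈ S_e} ∏_{i ∈ S_e, i ∉ {a,b}} i. -/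
/-!
Modulo `2 ^ e` the odd residues are exactly the units, and inversion permutes them. With `P` the
product of all of them, each term `∏_{i ≠ a, b} i` is `P * a⁻¹ * b⁻¹`, so
`2 * σ̂₂ ≡ P * ((∑ a)² - ∑ a²) (mod 2 ^ e)`. For `N = 2 ^ (e - 1)` we have `∑ a = N²`, which vanishes,
and `3 * ∑ a² = N * (4 * N² - 1)`, so `∑ a²` is `N` times an odd number. As `P` is odd,
`2 * σ̂₂ ≡ -N ≡ N (mod 2 * N)`, and halving gives `σ̂₂ ≡ 2 ^ (e - 2) (mod 2 ^ (e - 1))`.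
-/

open Finset

section PairSums

variable {ι R : Type*} [LinearOrder ι] [CommRing R]

theorem two_mul_sum_lt_mul (s : Finset ι) (y : ι → R) :
    2 * ∑ a ∈ s, ∑ b ∈ s with a < b, y a * y b = (∑ a ∈ s, y a) ^ 2 - ∑ a ∈ s, y a ^ 2 := by
  induction s using Finset.induction_on_max with
  | empty => simp
  | insert c s hc ih =>
    have hcs : c ∉ s := fun h => lt_irrefl c (hc c h)
    have hfilter : ∀ a ∈ s, {b ∈ insert c s | a < b} = insert c {b ∈ s | a < b} := fun a ha => by
      rw [filter_insert, if_pos (hc a ha)]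
    have hnot : ∀ a ∈ s, c ∉ {b ∈ s | a < b} := fun a _ h => hcs (mem_filter.mp h).1
    have htop : {b ∈ insert c s | c < b} = ∅ :=
      filter_eq_empty_iff.mpr fun b hb => by
        rcases mem_insert.mp hb with rfl | hb
        · exact lt_irrefl b
        · exact (hc b hb).not_gt
    rw [sum_insert hcs, htop, sum_empty, zero_add, sum_congr rfl fun a ha => by
      rw [hfilter a ha, sum_insert (hnot a ha)], sum_add_distrib, mul_add, ih,
      sum_insert hcs, sum_insert hcs, ← sum_mul]
    ring

theorem prod_erase_erase_eq_mul (s : Finset ι) (x y : ι → R) (hxy : ∀ i ∈ s, x i * y i = 1)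
    {a b : ι} (ha : a ∈ s) (hb : b ∈ s) (hab : a ≠ b) :
    ∏ i ∈ (s.erase a).erase b, x i = (∏ i ∈ s, x i) * y a * y b := by
  rw [← mul_prod_erase s x ha, ← mul_prod_erase (s.erase a) x (mem_erase.mpr ⟨hab.symm, hb⟩)]
  linear_combination -(∏ i ∈ (s.erase a).erase b, x i) * (x b * y b * hxy a ha + hxy b hb)

theorem two_mul_sum_lt_prod_erase_erase (s : Finset ι) (x y : ι → R)
    (hxy : ∀ i ∈ s, x i * y i = 1) :
    2 * ∑ a ∈ s, ∑ b ∈ s with a < b, ∏ i ∈ (s.erase a).erase b, x i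
      = (∏ i ∈ s, x i) * ((∑ a ∈ s, y a) ^ 2 - ∑ a ∈ s, y a ^ 2) := by
  rw [← two_mul_sum_lt_mul, mul_left_comm, mul_sum s _ (∏ i ∈ s, x i)]
  congr 1
  refine sum_congr rfl fun a ha => ?_
  rw [mul_sum]
  refine sum_congr rfl fun b hb => ?_
  obtain ⟨hb, hab⟩ := mem_filter.mp hb
  rw [prod_erase_erase_eq_mul s x y hxy ha hb hab.ne, mul_assoc]

end PairSums

def coprimeResidues (n : ℕ) : Finset ℕ := {a ∈ range n | a.Coprime n}

theorem coprime_val_inv {n a : ℕ} [NeZero n] (ha : a.Coprime n) :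
    ((a : ZMod n)⁻¹).val.Coprime n := by
  rw [← ZMod.isUnit_iff_coprime, ZMod.natCast_zmod_val]
  exact ((ZMod.unitOfCoprime a ha)⁻¹).isUnit

theorem sum_coprimeResidues_inv {M : Type*} [AddCommMonoid M] (n : ℕ) [NeZero n]
    (f : ZMod n → M) :
    ∑ a ∈ coprimeResidues n, f (a : ZMod n)⁻¹ = ∑ a ∈ coprimeResidues n, f a := by
  have hmem : ∀ a ∈ coprimeResidues n, ((a : ZMod n)⁻¹).val ∈ coprimeResidues n :=
    fun a ha => mem_filter.mpr ⟨mem_range.mpr (ZMod.val_lt _), coprime_val_inv (mem_filter.mp ha).2⟩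
  have hinv : ∀ a ∈ coprimeResidues n, ((((a : ZMod n)⁻¹).val : ZMod n)⁻¹).val = a := by
    intro a ha
    obtain ⟨hlt, hcop⟩ := mem_filter.mp ha
    rw [ZMod.natCast_zmod_val, ZMod.inv_eq_of_mul_eq_one n _ _ (ZMod.inv_mul_of_unit _
      ((ZMod.isUnit_iff_coprime a n).mpr hcop)), ZMod.val_cast_of_lt (mem_range.mp hlt)]
  exact sum_nbij' _ _ hmem hmem hinv hinv fun a _ => by rw [ZMod.natCast_zmod_val]

def sigmaHatTwo (s : Finset ℕ) : ℕ := ∑ a ∈ s, ∑ b ∈ s with a < b, ∏ i ∈ (s.erase a).erase b, i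

theorem two_mul_sigmaHatTwo_coprimeResidues (n : ℕ) [NeZero n] :
    2 * (sigmaHatTwo (coprimeResidues n) : ZMod n)
      = (∏ a ∈ coprimeResidues n, (a : ZMod n)) *
        ((∑ a ∈ coprimeResidues n, (a : ZMod n)) ^ 2 - ∑ a ∈ coprimeResidues n, (a : ZMod n) ^ 2) := by
  have hxy : ∀ a ∈ coprimeResidues n, (a : ZMod n) * (a : ZMod n)⁻¹ = 1 :=
    fun a ha => ZMod.coe_mul_inv_eq_one a (mem_filter.mp ha).2
  push_cast [sigmaHatTwo]
  rw [two_mul_sum_lt_prod_erase_erase _ _ _ hxy, sum_coprimeResidues_inv n (· ^ 2),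
    sum_coprimeResidues_inv n (fun x => x)]

theorem range_filter_odd_eq_coprimeResidues {e : ℕ} (he : e ≠ 0) :
    {a ∈ range (2 ^ e) | Odd a} = coprimeResidues (2 ^ e) := by
  ext a
  simp [coprimeResidues, Nat.coprime_pow_right_iff (Nat.pos_of_ne_zero he), Nat.coprime_two_right]

theorem sum_range_two_mul_filter_odd {M : Type*} [AddCommMonoid M] (f : ℕ → M) (n : ℕ) :
    ∑ j ∈ range (2 * n) with Odd j, f j = ∑ k ∈ range n, f (2 * k + 1) := by
  induction n with
  | zero => simp
  | succ n ih =>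
    rw [sum_filter] at ih ⊢
    rw [show 2 * (n + 1) = 2 * n + 1 + 1 by ring, sum_range_succ, sum_range_succ, ih, sum_range_succ]
    simp [Nat.odd_iff]

theorem sum_range_odd (n : ℕ) : ∑ k ∈ range n, (2 * k + 1) = n ^ 2 := by
  induction n with
  | zero => simp
  | succ n ih => rw [sum_range_succ, ih]; ring

theorem three_mul_sum_range_odd_sq_add (n : ℕ) :
    3 * ∑ k ∈ range n, (2 * k + 1) ^ 2 + n = 4 * n ^ 3 := by
  induction n with
  | zero => simp
  | succ n ih => rw [sum_range_succ]; linear_combination ih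

theorem sum_range_odd_sq_modEq {n : ℕ} (hn : n.Coprime 3) :
    ∑ k ∈ range n, (2 * k + 1) ^ 2 ≡ n [MOD 2 * n] := by
  set g := ∑ k ∈ range n, (2 * k + 1) ^ 2
  have h3 : 3 * g + n = 4 * n ^ 3 := three_mul_sum_range_odd_sq_add n
  obtain ⟨q, hq⟩ : n ∣ g :=
    hn.dvd_of_dvd_mul_left ((Nat.dvd_add_left (dvd_refl n)).mp (h3 ▸ ⟨4 * n ^ 2, by ring⟩))
  rcases n.eq_zero_or_pos with rfl | hpos
  · rfl
  obtain ⟨t, rfl⟩ : Odd q := by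
    have : 3 * q + 1 = 4 * n ^ 2 :=
      Nat.eq_of_mul_eq_mul_left hpos (by rw [hq] at h3; linear_combination h3)
    rw [Nat.odd_iff]
    omega
  rw [hq, Nat.ModEq, show n * (2 * t + 1) = n + 2 * n * t by ring, Nat.add_mul_mod_self_left]

theorem sum_odd_lt_two_pow (k : ℕ) : ∑ a ∈ range (2 ^ (k + 1)) with Odd a, a = (2 ^ k) ^ 2 := by
  rw [pow_succ', sum_range_two_mul_filter_odd, sum_range_odd]

theorem sum_sq_odd_lt_two_pow_modEq (k : ℕ) :
    ∑ a ∈ range (2 ^ (k + 1)) with Odd a, a ^ 2 ≡ 2 ^ k [MOD 2 ^ (k + 1)] := by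
  rw [pow_succ', sum_range_two_mul_filter_odd]
  exact sum_range_odd_sq_modEq (Nat.Coprime.pow_left _ (by norm_num))

theorem modEq_two_pow_of_two_mul_eq_neg_odd_mul {k σ q : ℕ} (hq : Odd q)
    (h : 2 * (σ : ZMod (2 ^ (k + 2))) = -(q * 2 ^ (k + 1))) : σ ≡ 2 ^ k [MOD 2 ^ (k + 1)] := by
  obtain ⟨t, rfl⟩ := hq
  have h0 : (2 ^ (k + 2) : ZMod (2 ^ (k + 2))) = 0 := by exact_mod_cast ZMod.natCast_self _
  apply Nat.ModEq.mul_left_cancel' (c := 2) two_ne_zero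
  rw [← pow_succ', ← pow_succ', ← ZMod.natCast_eq_natCast_iff]
  push_cast at h ⊢
  linear_combination h - (t + 1) * h0

theorem sigma_hat_two_mod (e : ℕ) (he : 3 ≤ e) :
    (∑ a ∈ (Finset.range (2 ^ e)).filter (fun j => Odd j),
      ∑ b ∈ ((Finset.range (2 ^ e)).filter (fun j => Odd j)).filter (fun b => a < b),
        ∏ i ∈ (((Finset.range (2 ^ e)).filter (fun j => Odd j)).erase a).erase b, i)
      ≡ 2 ^ (e - 2) [MOD 2 ^ (e - 1)] := by
  obtain ⟨k, rfl⟩ : ∃ k, e = k + 2 := ⟨e - 2, by omega⟩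
  rw [Nat.add_sub_cancel, show k + 2 - 1 = k + 1 by omega]
  change sigmaHatTwo {a ∈ range (2 ^ (k + 2)) | Odd a} ≡ 2 ^ k [MOD 2 ^ (k + 1)]
  have key := two_mul_sigmaHatTwo_coprimeResidues (2 ^ (k + 2))
  rw [← range_filter_odd_eq_coprimeResidues (by omega)] at key
  have hsum : ((∑ a ∈ range (2 ^ (k + 2)) with Odd a, a : ℕ) : ZMod (2 ^ (k + 2))) = 0 := by
    rw [ZMod.natCast_eq_zero_iff, sum_odd_lt_two_pow, ← pow_mul]
    exact pow_dvd_pow 2 (by omega)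
  have hsq := (ZMod.natCast_eq_natCast_iff _ _ _).mpr (sum_sq_odd_lt_two_pow_modEq (k + 1))
  have hodd : Odd (∏ a ∈ range (2 ^ (k + 2)) with Odd a, a) :=
    prod_induction _ Odd (fun _ _ => Odd.mul) odd_one fun a ha => (mem_filter.mp ha).2
  push_cast at hsum hsq
  rw [hsum, hsq] at key
  exact modEq_two_pow_of_two_mul_eq_neg_odd_mul hodd (by push_cast; linear_combination key)
end

section
/- For e ≥ 3, ∑_{i ∈ S_e} ((2^e - 1)!!)^2 / i^2 ≡ 2^{e-1} modulo 2^e, where each summand is the integer obtained by squaring the product of all odd positive integers less than 2^e except i. -/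
/-!
The odd residues modulo `2 ^ e` are the units of `ZMod (2 ^ e)`. In a finite abelian group the
product `p` of all elements satisfies `p⁻¹ = p`, since inversion permutes the group; hence
`(p / u) ^ 2 = (u⁻¹) ^ 2`, and inversion permuting the units once more turns the sum into
`∑ i ^ 2` over the odd `i < 2 ^ e`. That sum equals `n (4 n ^ 2 - 1) / 3` with `n = 2 ^ (e - 1)`,
which is `≡ n` modulo `2 n`.
-/

open Finset

section CommGroup

variable {G : Type*} [CommGroup G] [Fintype G]

theorem sq_prod_univ_eq_one : (∏ g : G, g) ^ 2 = 1 := by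
  have h : (∏ g : G, g)⁻¹ = ∏ g : G, g := by
    rw [← prod_inv_distrib]
    exact Equiv.prod_comp (Equiv.inv G) id
  rw [sq]
  exact inv_eq_iff_mul_eq_one.mp h

theorem sum_comp_sq_prod_univ_div {M : Type*} [AddCommMonoid M] (f : G → M) :
    ∑ g, f (((∏ h : G, h) / g) ^ 2) = ∑ g, f (g ^ 2) := by
  calc ∑ g, f (((∏ h : G, h) / g) ^ 2) = ∑ g, f (g⁻¹ ^ 2) := by
        simp only [div_pow, sq_prod_univ_eq_one, one_div, inv_pow]
    _ = ∑ g, f (g ^ 2) := Equiv.sum_comp (Equiv.inv G) (fun g => f (g ^ 2))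

end CommGroup

namespace ZMod

@[to_additive]
theorem prod_coprime_eq_prod_val {M : Type*} [CommMonoid M] {n : ℕ} [NeZero n] {s : Finset ℕ}
    (hs : ∀ i, i ∈ s ↔ i < n ∧ i.Coprime n) (f : ZMod n → M) :
    ∏ i ∈ s, f i = ∏ u : (ZMod n)ˣ, f u :=
  prod_bij' (fun i hi => unitOfCoprime i ((hs i).1 hi).2) (fun u _ => (u : ZMod n).val)
    (fun _ _ => mem_univ _)
    (fun u _ => (hs _).2 ⟨val_lt _, val_coe_unit_coprime u⟩)
    (fun i hi => val_natCast_of_lt ((hs i).1 hi).1)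
    (fun _ _ => Units.ext (natCast_zmod_val _))
    (fun _ _ => rfl)

theorem natCast_div_of_coprime {m d n : ℕ} (hd : d ∣ m) (hcop : d.Coprime n) :
    ((m / d : ℕ) : ZMod n) = m * (d : ZMod n)⁻¹ := by
  calc ((m / d : ℕ) : ZMod n) = (m / d : ℕ) * ((d : ZMod n) * (d : ZMod n)⁻¹) := by
        rw [coe_mul_inv_eq_one d hcop, mul_one]
    _ = m * (d : ZMod n)⁻¹ := by
        rw [← mul_assoc, ← Nat.cast_mul, Nat.div_mul_cancel hd]

end ZMod

theorem sum_sq_prod_div_modEq {n : ℕ} [NeZero n] {s : Finset ℕ}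
    (hs : ∀ i, i ∈ s ↔ i < n ∧ i.Coprime n) :
    ∑ i ∈ s, ((∏ j ∈ s, j) / i) ^ 2 ≡ ∑ i ∈ s, i ^ 2 [MOD n] := by
  set p : (ZMod n)ˣ := ∏ u, u
  have hprod : ((∏ j ∈ s, j : ℕ) : ZMod n) = p := by
    rw [Nat.cast_prod, ZMod.prod_coprime_eq_prod_val hs (fun x => x), Units.coe_prod]
  have hterm : ∀ i ∈ s, (((∏ j ∈ s, j) / i : ℕ) : ZMod n) = p * (i : ZMod n)⁻¹ := fun i hi => by
    rw [ZMod.natCast_div_of_coprime (dvd_prod_of_mem _ hi) ((hs i).1 hi).2, hprod]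
  rw [← ZMod.natCast_eq_natCast_iff]
  push_cast
  calc ∑ i ∈ s, (((∏ j ∈ s, j) / i : ℕ) : ZMod n) ^ 2
      = ∑ i ∈ s, (p * (i : ZMod n)⁻¹) ^ 2 := sum_congr rfl fun i hi => by rw [hterm i hi]
    _ = ∑ u : (ZMod n)ˣ, (((p / u) ^ 2 : (ZMod n)ˣ) : ZMod n) := by
        rw [ZMod.sum_coprime_eq_sum_val hs (fun x => (p * x⁻¹) ^ 2)]
        simp only [ZMod.inv_coe_unit, div_eq_mul_inv, Units.val_pow_eq_pow_val, Units.val_mul]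
    _ = ∑ u : (ZMod n)ˣ, ((u ^ 2 : (ZMod n)ˣ) : ZMod n) := sum_comp_sq_prod_univ_div _
    _ = ∑ i ∈ s, (i : ZMod n) ^ 2 := by
        rw [ZMod.sum_coprime_eq_sum_val hs (fun x => x ^ 2)]
        simp only [Units.val_pow_eq_pow_val]

theorem three_mul_sum_odd_sq_add (n : ℕ) :
    3 * ∑ i ∈ (range (2 * n)).filter Odd, i ^ 2 + n = 4 * n ^ 3 := by
  induction n with
  | zero => simp
  | succ n ih =>
    rw [sum_filter] at ih ⊢
    rw [show 2 * (n + 1) = 2 * n + 1 + 1 by ring, sum_range_succ, sum_range_succ]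
    have hodd : Odd (2 * n + 1) := odd_two_mul_add_one n
    have heven : ¬Odd (2 * n) := Nat.not_odd_iff_even.mpr (even_two_mul n)
    simp only [hodd, heven, if_true, if_false, add_zero]
    zify at ih ⊢
    linear_combination ih

theorem sum_odd_sq_modEq {n : ℕ} (hn : (2 * n).Coprime 3) :
    ∑ i ∈ (range (2 * n)).filter Odd, i ^ 2 ≡ n [MOD 2 * n] := by
  have h4 : 4 * n ^ 3 ≡ 3 * n + n [MOD 2 * n] :=
    Nat.modEq_iff_dvd.mpr ⟨2 - 2 * (n : ℤ) ^ 2, by push_cast; ring⟩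
  rw [← three_mul_sum_odd_sq_add] at h4
  exact Nat.ModEq.cancel_left_of_coprime hn (Nat.ModEq.add_right_cancel' n h4)

theorem sum_sq_mod_general (e : ℕ) :
    (∑ i ∈ (Finset.range (2 ^ e)).filter (fun j => Odd j),
      ((∏ j ∈ (Finset.range (2 ^ e)).filter (fun j => Odd j), j) / i) ^ 2)
      ≡ 2 ^ (e - 1) [MOD 2 ^ e] := by
  rcases e with _ | e
  · exact Nat.modEq_one
  have hs : ∀ i, i ∈ (range (2 ^ (e + 1))).filter Odd ↔
      i < 2 ^ (e + 1) ∧ i.Coprime (2 ^ (e + 1)) := fun i => by simp [Nat.coprime_pow_right_iff e.succ_pos]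
  have hcop : (2 ^ (e + 1)).Coprime 3 := Nat.Coprime.pow_left _ (by decide)
  refine (sum_sq_prod_div_modEq hs).trans ?_
  rw [pow_succ'] at hcop ⊢
  exact sum_odd_sq_modEq hcop

theorem sum_sq_mod (e : ℕ) (he : 3 ≤ e) :
    (∑ i ∈ (Finset.range (2 ^ e)).filter (fun j => Odd j),
      ((∏ j ∈ (Finset.range (2 ^ e)).filter (fun j => Odd j), j) / i) ^ 2)
      ≡ 2 ^ (e - 1) [MOD 2 ^ e] :=
  sum_sq_mod_general e
end

section
/- For e ≥ 3, define T_{1,e} = ∑ (2^e - 1)!!/(a·b) taken over pairs (a,b) with a < b both odd, less than 2^e, and a ≢ b modulo 2^{e-1}. Then T_{1,e} ≡ 0 modulo 2^{e-1}. -/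
/-!
Modulo `2 ^ e`, the term `(2^e - 1)!! / (a * b)` is `P * a⁻¹ * b⁻¹` with `P = (2^e - 1)!!`.
Doubling `T` gives the sum over all ordered pairs with `a ≢ b [MOD 2^(e-1)]`; for fixed `a` the
excluded `b` are `a` and `a ± 2^(e-1)`, and `(a + 2^(e-1))⁻¹ = a⁻¹ + 2^(e-1)`. Hence
`2 T ≡ -P (2 ∑ a⁻² + 2^(e-1) ∑ a⁻¹)`. Inversion permutes the odd residues, so
`∑ a⁻¹ ≡ ∑ a = 4^(e-1) ≡ 0` and `2 ∑ a⁻² ≡ 2 ∑ a² ≡ 0 [MOD 2^e]`.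
-/

open Finset

theorem Finset.two_nsmul_sum_sum_filter_lt {α M : Type*} [LinearOrder α] [AddCommMonoid M]
    (s : Finset α) (r : α → α → Prop) [DecidableRel r]
    (hr : ∀ a b, r a b → r b a) (hirr : ∀ a, ¬ r a a) (f : α → α → M)
    (hf : ∀ a b, f a b = f b a) :
    2 • ∑ a ∈ s, ∑ b ∈ s.filter (fun b => a < b ∧ r a b), f a b
      = ∑ a ∈ s, ∑ b ∈ s.filter (r a), f a b := by
  have hswap : ∑ a ∈ s, ∑ b ∈ s.filter (fun b => a < b ∧ r a b), f a b
      = ∑ a ∈ s, ∑ b ∈ s.filter (fun b => b < a ∧ r a b), f a b := by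
    rw [sum_comm' (t' := s) (s' := fun a => s.filter (fun b => b < a ∧ r a b))]
    · exact sum_congr rfl fun a _ => sum_congr rfl fun b _ => hf b a
    · intro b a
      simp only [mem_filter]
      exact ⟨fun ⟨hb, ha, hba, h⟩ => ⟨⟨hb, hba, hr _ _ h⟩, ha⟩,
        fun ⟨⟨hb, hba, h⟩, ha⟩ => ⟨hb, ha, hba, hr _ _ h⟩⟩
  rw [two_nsmul]
  nth_rewrite 2 [hswap]
  rw [← sum_add_distrib]
  refine sum_congr rfl fun a _ => ?_
  rw [← sum_union (disjoint_filter.2 fun b _ h h' => lt_asymm h.1 h'.1), ← filter_or]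
  refine sum_congr (filter_congr fun b _ => ?_) fun _ _ => rfl
  rcases lt_trichotomy a b with hab | rfl | hab
  · simp [hab, hab.not_gt]
  · simp [hirr]
  · simp [hab, hab.not_gt]

theorem sum_filter_odd_range_two_mul {M : Type*} [AddCommMonoid M] (f : ℕ → M) (m : ℕ) :
    ∑ a ∈ (range (2 * m)).filter Odd, f a = ∑ k ∈ range m, f (2 * k + 1) := by
  induction m with
  | zero => simp
  | succ m ih =>
    rw [sum_filter] at ih ⊢
    rw [mul_add, mul_one, sum_range_succ, sum_range_succ, ih, sum_range_succ]
    simp [Nat.odd_iff]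

theorem sum_filter_odd_range_two_mul_id (m : ℕ) :
    ∑ a ∈ (range (2 * m)).filter Odd, a = m ^ 2 := by
  rw [sum_filter_odd_range_two_mul]
  induction m with
  | zero => simp
  | succ m ih => rw [sum_range_succ, ih]; ring

theorem three_mul_sum_range_sq_two_mul_add_one (m : ℕ) :
    3 * ∑ k ∈ range m, (2 * k + 1) ^ 2 + m = 4 * m ^ 3 := by
  induction m with
  | zero => simp
  | succ m ih => rw [sum_range_succ, mul_add]; nlinarith [ih]

theorem dvd_sum_filter_odd_range_two_mul_sq {m : ℕ} (hm : Nat.Coprime 3 m) :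
    m ∣ ∑ a ∈ (range (2 * m)).filter Odd, a ^ 2 := by
  rw [sum_filter_odd_range_two_mul (· ^ 2)]
  refine hm.symm.dvd_of_dvd_mul_left ⟨4 * m ^ 2 - 1, ?_⟩
  have := three_mul_sum_range_sq_two_mul_add_one m
  rw [Nat.mul_sub, mul_one, show m * (4 * m ^ 2) = 4 * m ^ 3 by ring]
  omega

theorem Finset.mul_dvd_prod_of_ne {ι M : Type*} [DecidableEq ι] [CommMonoid M] (f : ι → M)
    {s : Finset ι} {a b : ι} (ha : a ∈ s) (hb : b ∈ s) (hab : a ≠ b) :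
    f a * f b ∣ ∏ i ∈ s, f i := by
  rw [← prod_pair hab]
  exact prod_dvd_prod_of_subset _ _ _ (insert_subset ha (singleton_subset_iff.2 hb))

theorem ZMod.natCast_div_mul_eq {n x a b : ℕ} (hab : a * b ∣ x) (ha : a.Coprime n)
    (hb : b.Coprime n) :
    ((x / (a * b) : ℕ) : ZMod n) = x * (a : ZMod n)⁻¹ * (b : ZMod n)⁻¹ := by
  obtain ⟨q, rfl⟩ := hab
  rcases Nat.eq_zero_or_pos (a * b) with h0 | hpos
  · simp [h0]
  rw [Nat.mul_div_cancel_left q hpos]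
  push_cast
  linear_combination (-(q : ZMod n) * b * (b : ZMod n)⁻¹) * ZMod.coe_mul_inv_eq_one a ha
    - (q : ZMod n) * ZMod.coe_mul_inv_eq_one b hb

theorem ZMod.sum_inv_filter_coprime {M : Type*} [AddCommMonoid M] (n : ℕ) [NeZero n]
    (F : ZMod n → M) :
    ∑ a ∈ (range n).filter (·.Coprime n), F (a : ZMod n)⁻¹
      = ∑ a ∈ (range n).filter (·.Coprime n), F a := by
  have hinv : ∀ a ∈ (range n).filter (·.Coprime n), ((a : ZMod n)⁻¹⁻¹) = a := fun a ha =>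
    ZMod.inv_eq_of_mul_eq_one _ _ _ <| by
      rw [mul_comm]; exact ZMod.coe_mul_inv_eq_one a (mem_filter.1 ha).2
  refine sum_nbij' (fun a => ((a : ZMod n)⁻¹).val) (fun a => ((a : ZMod n)⁻¹).val)
    ?_ ?_ ?_ ?_ fun a _ => by rw [ZMod.natCast_zmod_val]
  iterate 2
    intro a ha
    refine mem_filter.2 ⟨mem_range.2 (ZMod.val_lt _), (ZMod.isUnit_iff_coprime _ _).1 ?_⟩
    exact IsUnit.of_mul_eq_one _ (ZMod.val_inv_mul (mem_filter.1 ha).2)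
  iterate 2
    intro a ha
    rw [ZMod.natCast_zmod_val, hinv a ha, ZMod.val_cast_of_lt (mem_range.1 (mem_filter.1 ha).1)]

theorem filter_odd_range_two_pow {e : ℕ} (he : e ≠ 0) :
    (range (2 ^ e)).filter Odd = (range (2 ^ e)).filter (·.Coprime (2 ^ e)) :=
  filter_congr fun a _ => by
    rw [Nat.coprime_pow_right_iff (Nat.pos_of_ne_zero he), Nat.coprime_two_right]

theorem sum_filter_modEq_eq_add {M : Type*} [AddCommMonoid M] {n m a : ℕ} (hn : n = 2 * m)
    (hm : Even m) (ha : a < n) (hodd : Odd a) (F : ZMod n → M) :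
    ∑ b ∈ ((range n).filter Odd).filter (a ≡ · [MOD m]), F b = F a + F (a + m) := by
  subst hn
  obtain ⟨k, rfl⟩ := hm
  rw [Nat.odd_iff] at hodd
  have hset : ((range (2 * (k + k))).filter Odd).filter (a ≡ · [MOD k + k])
      = {a, if a < k + k then a + (k + k) else a - (k + k)} := by
    ext b
    simp only [mem_filter, mem_range, mem_insert, mem_singleton, Nat.odd_iff,
      Nat.modEq_iff_dvd]
    constructor
    · rintro ⟨⟨hb, -⟩, j, hj⟩
      push_cast at hj
      have hj1 : -2 < j := by nlinarith
      have hj2 : j < 2 := by nlinarith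
      interval_cases j <;> split_ifs <;> omega
    · rintro (rfl | rfl)
      · exact ⟨⟨ha, hodd⟩, 0, by simp⟩
      · split_ifs
        · exact ⟨⟨by omega, by omega⟩, 1, by push_cast; ring⟩
        · exact ⟨⟨by omega, by omega⟩, -1, by push_cast; omega⟩
  rw [hset, sum_pair (by split_ifs <;> omega)]
  congr 2
  split_ifs with h
  · push_cast; rfl
  · have h0 : ((2 * (k + k) : ℕ) : ZMod (2 * (k + k))) = 0 := ZMod.natCast_self _
    push_cast [Nat.cast_sub (not_lt.1 h)] at h0 ⊢
    linear_combination -h0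

theorem ZMod.two_pow_eq_zero (e : ℕ) : (2 : ZMod (2 ^ e)) ^ e = 0 := by
  exact_mod_cast ZMod.natCast_self (2 ^ e)

theorem ZMod.two_pow_pred_mul_odd {e a : ℕ} (he : e ≠ 0) (ha : Odd a) :
    (2 : ZMod (2 ^ e)) ^ (e - 1) * a = 2 ^ (e - 1) := by
  obtain ⟨k, rfl⟩ := ha
  have h2 : (2 : ZMod (2 ^ e)) * 2 ^ (e - 1) = 0 := by
    rw [mul_pow_sub_one he, ZMod.two_pow_eq_zero]
  push_cast
  linear_combination (k : ZMod (2 ^ e)) * h2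

theorem ZMod.inv_add_two_pow_pred {e a : ℕ} (he : 2 ≤ e) (ha : Odd a) :
    ((a : ZMod (2 ^ e)) + 2 ^ (e - 1))⁻¹ = (a : ZMod (2 ^ e))⁻¹ + 2 ^ (e - 1) := by
  have hinv := ZMod.coe_mul_inv_eq_one (n := 2 ^ e) a ((Nat.coprime_two_right.2 ha).pow_right e)
  have hodd := ZMod.two_pow_pred_mul_odd (by omega : e ≠ 0) ha
  have htwice : (2 : ZMod (2 ^ e)) * 2 ^ (e - 1) = 2 ^ e := mul_pow_sub_one (by omega) 2
  have hsq : (2 : ZMod (2 ^ e)) ^ (e - 1) * 2 ^ (e - 1) = 2 ^ e * 2 ^ (e - 2) := by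
    rw [← pow_add, ← pow_add]; congr 1; omega
  refine ZMod.inv_eq_of_mul_eq_one _ _ _ ?_
  -- with `h = 2^(e-1)`: `h * a = h = h * a⁻¹`, `2 * h = 0` and `h * h = 0`
  linear_combination (1 + (2 : ZMod (2 ^ e)) ^ (e - 1)) * hinv
    + (1 - (a : ZMod (2 ^ e))⁻¹) * hodd + htwice + hsq
    + (1 + 2 ^ (e - 2)) * ZMod.two_pow_eq_zero e

theorem ZMod.sum_inv_filter_odd_two_pow {e : ℕ} (he : 2 ≤ e) :
    ∑ a ∈ (range (2 ^ e)).filter Odd, (a : ZMod (2 ^ e))⁻¹ = 0 := by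
  have hsum : ∑ a ∈ (range (2 ^ e)).filter Odd, a = (2 ^ (e - 1)) ^ 2 := by
    rw [← mul_pow_sub_one (by omega : e ≠ 0), sum_filter_odd_range_two_mul_id]
  rw [filter_odd_range_two_pow (by omega), ZMod.sum_inv_filter_coprime _ fun x => x,
    ← filter_odd_range_two_pow (by omega), ← Nat.cast_sum, hsum, ZMod.natCast_eq_zero_iff,
    ← pow_mul]
  exact pow_dvd_pow 2 (by omega)

theorem ZMod.two_mul_sum_inv_sq_filter_odd_two_pow {e : ℕ} (he : e ≠ 0) :
    2 * ∑ a ∈ (range (2 ^ e)).filter Odd, ((a : ZMod (2 ^ e))⁻¹) ^ 2 = 0 := by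
  obtain ⟨c, hc⟩ : 2 ^ (e - 1) ∣ ∑ a ∈ (range (2 ^ e)).filter Odd, a ^ 2 := by
    rw [← mul_pow_sub_one he]
    exact dvd_sum_filter_odd_range_two_mul_sq (Nat.Coprime.pow_right _ (by norm_num))
  rw [filter_odd_range_two_pow he, ZMod.sum_inv_filter_coprime _ fun x => x ^ 2,
    ← filter_odd_range_two_pow he]
  have hcast := congrArg (fun x : ℕ => (2 * x : ZMod (2 ^ e))) hc
  push_cast at hcast
  rw [hcast, ← mul_assoc, mul_pow_sub_one he, ZMod.two_pow_eq_zero, zero_mul]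

theorem ZMod.sum_inv_filter_not_modEq {e a : ℕ} (he : 2 ≤ e)
    (ha : a ∈ (range (2 ^ e)).filter Odd) :
    ∑ b ∈ ((range (2 ^ e)).filter Odd).filter (fun b => ¬ a ≡ b [MOD 2 ^ (e - 1)]),
      (b : ZMod (2 ^ e))⁻¹ = -(2 * (a : ZMod (2 ^ e))⁻¹ + 2 ^ (e - 1)) := by
  have hsplit := sum_filter_add_sum_filter_not ((range (2 ^ e)).filter Odd)
    (a ≡ · [MOD 2 ^ (e - 1)]) fun b => (b : ZMod (2 ^ e))⁻¹
  rw [sum_filter_modEq_eq_add (mul_pow_sub_one (by omega) 2).symm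
    (Nat.even_pow.2 ⟨even_two, by omega⟩) (mem_range.1 (mem_filter.1 ha).1) (mem_filter.1 ha).2,
    ZMod.sum_inv_filter_odd_two_pow he] at hsplit
  push_cast at hsplit
  rw [ZMod.inv_add_two_pow_pred he (mem_filter.1 ha).2] at hsplit
  linear_combination hsplit

theorem T1_mod (e : ℕ) (he : 3 ≤ e) :
    (2 ^ (e - 1) : ℕ) ∣
      ∑ a ∈ (Finset.range (2 ^ e)).filter (fun j => Odd j),
        ∑ b ∈ ((Finset.range (2 ^ e)).filter (fun j => Odd j)).filter
            (fun b => a < b ∧ ¬ a ≡ b [MOD 2 ^ (e - 1)]),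
          (∏ j ∈ (Finset.range (2 ^ e)).filter (fun j => Odd j), j) / (a * b) := by
  set S := (range (2 ^ e)).filter Odd
  set P := ∏ j ∈ S, j
  have hcop : ∀ a ∈ S, a.Coprime (2 ^ e) := fun a ha =>
    (Nat.coprime_two_right.2 (mem_filter.1 ha).2).pow_right e
  rw [← Nat.mul_dvd_mul_iff_left two_pos, mul_pow_sub_one (by omega), ← smul_eq_mul,
    two_nsmul_sum_sum_filter_lt S _ (fun a b h h' => h h'.symm) (fun a h => h rfl)
      (fun a b => P / (a * b)) (fun a b => by rw [mul_comm]),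
    ← ZMod.natCast_eq_zero_iff]
  simp only [Nat.cast_sum]
  calc ∑ a ∈ S, ∑ b ∈ S.filter (fun b => ¬ a ≡ b [MOD 2 ^ (e - 1)]),
        (((P / (a * b)) : ℕ) : ZMod (2 ^ e))
      = ∑ a ∈ S, P * (a : ZMod (2 ^ e))⁻¹ *
          ∑ b ∈ S.filter (fun b => ¬ a ≡ b [MOD 2 ^ (e - 1)]), (b : ZMod (2 ^ e))⁻¹ := by
        refine sum_congr rfl fun a ha => ?_
        rw [mul_sum]
        refine sum_congr rfl fun b hb => ?_
        obtain ⟨hbS, hab⟩ := mem_filter.1 hb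
        have hne : a ≠ b := fun h => hab (h ▸ Nat.ModEq.refl a)
        exact ZMod.natCast_div_mul_eq (mul_dvd_prod_of_ne id ha hbS hne) (hcop a ha) (hcop b hbS)
    _ = ∑ a ∈ S, P * (a : ZMod (2 ^ e))⁻¹ * -(2 * (a : ZMod (2 ^ e))⁻¹ + 2 ^ (e - 1)) :=
        sum_congr rfl fun a ha => by rw [ZMod.sum_inv_filter_not_modEq (by omega) ha]
    _ = -(P * (2 * ∑ a ∈ S, ((a : ZMod (2 ^ e))⁻¹) ^ 2
          + 2 ^ (e - 1) * ∑ a ∈ S, (a : ZMod (2 ^ e))⁻¹)) := by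
        rw [mul_sum, mul_sum, ← sum_add_distrib, mul_sum, ← sum_neg_distrib]
        exact sum_congr rfl fun a _ => by ring
    _ = 0 := by
      rw [ZMod.two_mul_sum_inv_sq_filter_odd_two_pow (by omega),
        ZMod.sum_inv_filter_odd_two_pow (by omega)]
      ring
end
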